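/- arXiv:2411.07707 — 2 statements merged into one kernel-verified Lean document; each statement's English description precedes it below -/
import Mathlib

section
/- Let V = ⊕_{n∈ℕ} V(n) be a vertex operator algebra with Virasoro operators L(n), and let ρ : T → G be a holomorphic family of transformations with ρ_0(z) = z, defining operators U(ρ_ζ) = ρ_ζ'(0)^{L(0)} exp(Σ_{k≥1} c_k(ζ) L(k)) on each V^{≤n}. Then for every v ∈ V^{≤n}: ∂_ζ U(ρ_ζ) v |_{ζ=0} = − ∂_ζ U(ρ_ζ^{-1}) v |_{ζ=0} = Σ_{k≥1} (1/k!) (∂_ζ ρ_ζ^{(k)}(0)|_{ζ=0}) L(k−1) v, where ρ_ζ^{(k)}(z) = ∂_z^k ρ_ζ(z) and the sum is finite on V^{≤n}. -/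
/-!
STATEMENT 4: Let `V = ⊕_{n∈ℕ} V(n)` be a vertex operator algebra with Virasoro operators
`L(n)`, and let `ρ : T → 𝔾` be a holomorphic family of transformations with `ρ_0(z) = z`,
defining operators `U(ρ_ζ) = ρ_ζ'(0)^{L(0)} exp(Σ_{k≥1} c_k(ζ) L(k))` on each `V^{≤n}`.
Then for every `v ∈ V^{≤n}`:
`∂_ζ U(ρ_ζ) v |_{ζ=0} = − ∂_ζ U(ρ_ζ^{-1}) v |_{ζ=0}
   = Σ_{k≥1} (1/k!) (∂_ζ ρ_ζ^{(k)}(0)|_{ζ=0}) L(k−1) v`,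
where `ρ_ζ^{(k)}(z) = ∂_z^k ρ_ζ(z)` and the sum is finite on `V^{≤n}`.

Encoding: the `ℕ`-grading of `V` is given by commuting projections `P m` onto `V(m)` with
pointwise finite supports summing to the identity; `L k` lowers the degree by `k` and `L 0`
acts on `V(m)` as `m`; `v ∈ V^{≤n}` means `P m v = 0` for `m > n`.  For `a ≠ 0` and scalars
`c_k`, `U = a^{L(0)} ∘ exp(Σ_{k≥1} c_k L(k))` is realized by `aPow` and `expD` below (all
sums are finite on `V^{≤n}`, and are recorded as `finsum`s).  The families `ρ_ζ` and
`ρ_ζ^{-1}` are formal power series families, inverse to each other under composition, each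
written in the exponential form `a_1(ζ) · exp(Σ_k c_k(ζ) z^{k+1}∂_z) z`.  The `ζ`-derivative
of the `V`-valued function is expressed through an arbitrary linear functional `φ`, and
`(1/k!) ρ_ζ^{(k)}(0) = coeff_k (ρ_ζ)`.
-/

open PowerSeries

/-- The vector field coefficient series `Σ_{k ≥ 1} c_k z^{k+1}`. -/
noncomputable def vecField (c : ℕ → ℂ) : PowerSeries ℂ :=
  PowerSeries.mk fun n => if 2 ≤ n then c (n - 1) else 0

/-- The derivation `f ↦ (Σ_{k≥1} c_k z^{k+1}) ⬝ ∂_z f`. -/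
noncomputable def liftD (c : ℕ → ℂ) (f : PowerSeries ℂ) : PowerSeries ℂ :=
  vecField c * PowerSeries.derivativeFun f

/-- The formal flow `exp(Σ_{k≥1} c_k z^{k+1} ∂_z) z`. -/
noncomputable def expFlow (c : ℕ → ℂ) : PowerSeries ℂ :=
  PowerSeries.mk fun n =>
    ∑ m ∈ Finset.range (n + 1), (m.factorial : ℂ)⁻¹ * coeff n ((liftD c)^[m] PowerSeries.X)

/-- Composition `f ∘ g` of formal power series (`g` with zero constant term). -/
noncomputable def pcomp (f g : PowerSeries ℂ) : PowerSeries ℂ :=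
  PowerSeries.mk fun n => ∑ m ∈ Finset.range (n + 1), coeff m f * coeff n (g ^ m)

section
variable {V : Type*} [AddCommGroup V] [Module ℂ V]

/-- `Σ_{k ≥ 1} c_k L(k)`, as an operator on `V` (a finite sum on each `V^{≤n}`). -/
noncomputable def Dop (L : ℕ → V →ₗ[ℂ] V) (c : ℕ → ℂ) (v : V) : V :=
  ∑ᶠ k : ℕ, c (k + 1) • L (k + 1) v

/-- `exp(Σ_{k ≥ 1} c_k L(k))`, acting on `V` (a finite sum on each `V^{≤n}`). -/
noncomputable def expD (L : ℕ → V →ₗ[ℂ] V) (c : ℕ → ℂ) (v : V) : V :=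
  ∑ᶠ m : ℕ, (m.factorial : ℂ)⁻¹ • (Dop L c)^[m] v

/-- `a^{L(0)}`, acting as `a^m` on `V(m)`. -/
noncomputable def aPow (P : ℕ → V →ₗ[ℂ] V) (a : ℂ) (v : V) : V :=
  ∑ᶠ m : ℕ, a ^ m • P m v

/-- The change-of-coordinate operator `U(α) = α'(0)^{L(0)} ∘ exp(Σ_{k≥1} c_k L(k))`. -/
noncomputable def Uop (L P : ℕ → V →ₗ[ℂ] V) (a : ℂ) (c : ℕ → ℂ) (v : V) : V :=
  aPow P a (expD L c v)

/-!
At `ζ = 0` all `c_k` vanish, so `U(ρ_0) = id` and only first-order terms survive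
differentiation: `∂_ζ exp(Σ c_k L(k))` gives `Σ c_k'(0) L(k)` and `∂_ζ a^{L(0)}` gives
`a'(0) L(0)`. The same first-order computation on the power-series side gives
`∂_ζ ρ_ζ |₀ = a'(0) z + Σ c_k'(0) z^{k+1}`, whose coefficients are the ones in front of the
`L(k-1)`. For the inverse family, differentiating `ρ_ζ ∘ ρ_ζ⁻¹ = z` at the identity gives
`∂_ζ ρ_ζ⁻¹ = -∂_ζ ρ_ζ`.

`V` carries no topology, so `V`-valued maps are differentiated weakly, against every linear
functional; power-series-valued maps are differentiated coefficientwise.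
-/

open Filter Topology

theorem finsum_eq_sum_range_of_eq_zero {M : Type*} [AddCommMonoid M] {f : ℕ → M} {N : ℕ}
    (h : ∀ k, N ≤ k → f k = 0) : ∑ᶠ k, f k = ∑ k ∈ Finset.range N, f k :=
  finsum_eq_sum_of_support_subset f fun k hk => by
    simp only [Finset.coe_range, Set.mem_Iio]
    by_contra hN
    exact hk (h k (not_lt.mp hN))

theorem inv_mul_deriv_const_mul {𝕜 : Type*} [NontriviallyNormedField 𝕜] {f : 𝕜 → 𝕜}
    {f' x r : 𝕜} (hf : HasDerivAt f f' x) (hr : r ≠ 0) : r⁻¹ * deriv (fun ζ => r * f ζ) x = f' := by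
  rw [(hf.const_mul r).deriv, inv_mul_cancel_left₀ hr]

def HasCoeffDerivAt (f : ℂ → PowerSeries ℂ) (f' : PowerSeries ℂ) (x : ℂ) : Prop :=
  ∀ n, HasDerivAt (fun ζ => coeff n (f ζ)) (coeff n f') x

namespace HasCoeffDerivAt

variable {f g : ℂ → PowerSeries ℂ} {f' g' : PowerSeries ℂ} {x : ℂ}

theorem unique {f'' : PowerSeries ℂ} (hf : HasCoeffDerivAt f f' x)
    (hf' : HasCoeffDerivAt f f'' x) : f' = f'' :=
  PowerSeries.ext fun n => (hf n).unique (hf' n)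

theorem congr_of_eventuallyEq (hf : HasCoeffDerivAt f f' x) (h : g =ᶠ[𝓝 x] f) :
    HasCoeffDerivAt g f' x :=
  fun n => (hf n).congr_of_eventuallyEq (h.fun_comp (coeff n))

theorem mul (hf : HasCoeffDerivAt f f' x) (hg : HasCoeffDerivAt g g' x) :
    HasCoeffDerivAt (fun ζ => f ζ * g ζ) (f' * g x + f x * g') x := by
  intro n
  simp only [coeff_mul, map_add, ← Finset.sum_add_distrib]
  exact HasDerivAt.fun_sum fun p _ => (hf p.1).mul (hg p.2)

theorem pow (hf : HasCoeffDerivAt f f' x) :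
    ∀ m : ℕ, HasCoeffDerivAt (fun ζ => f ζ ^ m) (m * f x ^ (m - 1) * f') x
  | 0 => fun n => by simpa using hasDerivAt_const x (coeff n (1 : PowerSeries ℂ))
  | m + 1 => by
    convert (hf.pow m).mul hf using 1
    · simp only [pow_succ]
    · rcases m with _ | m <;> simp only [Nat.add_sub_cancel] <;> push_cast <;> ring

theorem derivative (hf : HasCoeffDerivAt f f' x) :
    HasCoeffDerivAt (fun ζ => d⁄dX ℂ (f ζ)) (d⁄dX ℂ f') x := fun n => by
  simpa only [coeff_derivative] using (hf (n + 1)).mul_const _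

end HasCoeffDerivAt

theorem hasCoeffDerivAt_const (f : PowerSeries ℂ) (x : ℂ) :
    HasCoeffDerivAt (fun _ => f) 0 x := fun n => by
  simpa using hasDerivAt_const x (coeff n f)

theorem hasCoeffDerivAt_C {a : ℂ → ℂ} {a' x : ℂ} (ha : HasDerivAt a a' x) :
    HasCoeffDerivAt (fun ζ => C (a ζ)) (C a') x := by
  intro n
  rcases n with _ | n
  · simpa using ha
  · simpa [coeff_C] using hasDerivAt_const x (0 : ℂ)

section FormalFlow

variable {c : ℕ → ℂ → ℂ} {c' : ℕ → ℂ} {x : ℂ}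

theorem vecField_zero : vecField (fun _ => 0) = 0 := by
  ext n
  simp [vecField]

theorem liftD_eq_vecField_mul_derivative (c : ℕ → ℂ) (f : PowerSeries ℂ) :
    liftD c f = vecField c * d⁄dX ℂ f := rfl

theorem liftD_zero (f : PowerSeries ℂ) : liftD (fun _ => 0) f = 0 := by
  rw [liftD, vecField_zero, zero_mul]

theorem expFlow_zero : expFlow (fun _ => 0) = X := by
  ext n
  rw [expFlow, coeff_mk, Finset.sum_eq_single 0]
  · simp
  · rintro (_ | m) _ hm
    · exact absurd rfl hm
    · rw [Function.iterate_succ_apply', liftD_zero, map_zero, mul_zero]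
  · simp

theorem coeff_zero_expFlow (c : ℕ → ℂ) : coeff 0 (expFlow c) = 0 := by
  simp [expFlow]

theorem hasCoeffDerivAt_vecField (hc : ∀ k, HasDerivAt (c k) (c' k) x) :
    HasCoeffDerivAt (fun ζ => vecField (c · ζ)) (vecField c') x := fun n => by
  by_cases hn : 2 ≤ n
  · simpa [vecField, hn] using hc (n - 1)
  · simpa [vecField, hn] using hasDerivAt_const x (0 : ℂ)

theorem hasCoeffDerivAt_iterate_liftD (hc : ∀ k, HasDerivAt (c k) (c' k) x)
    (hc0 : ∀ k, c k x = 0) :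
    ∀ m : ℕ, HasCoeffDerivAt (fun ζ => (liftD (c · ζ))^[m] X)
      (if m = 1 then vecField c' else 0) x
  | 0 => hasCoeffDerivAt_const X x
  | m + 1 => by
    have h := (hasCoeffDerivAt_vecField hc).mul
      (hasCoeffDerivAt_iterate_liftD hc hc0 m).derivative
    simp only [(funext hc0 : (c · x) = fun _ => 0), vecField_zero, zero_mul, add_zero] at h
    simp only [Function.iterate_succ_apply', liftD_eq_vecField_mul_derivative]
    convert h using 1
    rcases m with _ | m
    · simp
    · simp [Function.iterate_succ_apply', liftD_zero]

theorem hasCoeffDerivAt_expFlow (hc : ∀ k, HasDerivAt (c k) (c' k) x) (hc0 : ∀ k, c k x = 0) :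
    HasCoeffDerivAt (fun ζ => expFlow (c · ζ)) (vecField c') x := fun n => by
  have h := HasDerivAt.fun_sum (u := Finset.range (n + 1)) fun m _ =>
    (hasCoeffDerivAt_iterate_liftD hc hc0 m n).const_mul ((m.factorial : ℂ)⁻¹)
  have hval : ∑ m ∈ Finset.range (n + 1),
      (m.factorial : ℂ)⁻¹ * coeff n (if m = 1 then vecField c' else 0) = coeff n (vecField c') := by
    rcases n with _ | n
    · simp [vecField]
    · simp [apply_ite (coeff (n + 1)), mul_ite]
  rw [hval] at h
  simpa only [expFlow, coeff_mk] using h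

end FormalFlow

theorem hasCoeffDerivAt_of_eventuallyEq_C_mul_expFlow {ρ : ℂ → PowerSeries ℂ} {a : ℂ → ℂ}
    {c : ℕ → ℂ → ℂ} {a' x : ℂ} {c' : ℕ → ℂ} (ha : HasDerivAt a a' x) (ha1 : a x = 1)
    (hc : ∀ k, HasDerivAt (c k) (c' k) x) (hc0 : ∀ k, c k x = 0)
    (hρ : ∀ᶠ ζ in 𝓝 x, ρ ζ = C (a ζ) * expFlow (c · ζ)) :
    HasCoeffDerivAt ρ (C a' * X + vecField c') x := by
  have h := (hasCoeffDerivAt_C ha).mul (hasCoeffDerivAt_expFlow hc hc0)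
  rw [ha1, (funext hc0 : (c · x) = fun _ => 0), expFlow_zero, map_one, one_mul] at h
  exact h.congr_of_eventuallyEq hρ

theorem X_pcomp {g : PowerSeries ℂ} (hg : coeff 0 g = 0) : pcomp X g = g := by
  ext n
  rw [pcomp, coeff_mk, Finset.sum_eq_single 1]
  · simp
  · intro m _ hm
    simp [coeff_X, hm]
  · rcases n with _ | n
    · simpa using hg
    · simp

theorem coeff_one_pcomp (f g : PowerSeries ℂ) : coeff 1 (pcomp f g) = coeff 1 f * coeff 1 g := by
  simp [pcomp, Finset.sum_range_succ]

theorem differentiableAt_coeff_one_of_pcomp_eq_X {f g : ℂ → PowerSeries ℂ} {x : ℂ}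
    (hf : DifferentiableAt ℂ (fun ζ => coeff 1 (f ζ)) x) (hfx : coeff 1 (f x) ≠ 0)
    (h : ∀ᶠ ζ in 𝓝 x, pcomp (f ζ) (g ζ) = X) :
    DifferentiableAt ℂ (fun ζ => coeff 1 (g ζ)) x := by
  refine (hf.inv hfx).congr_of_eventuallyEq ?_
  filter_upwards [h] with ζ hζ
  have h1 := coeff_one_pcomp (f ζ) (g ζ)
  rw [hζ, coeff_one_X] at h1
  exact eq_inv_of_mul_eq_one_right h1.symm

namespace HasCoeffDerivAt

variable {f g : ℂ → PowerSeries ℂ} {f' g' : PowerSeries ℂ} {x : ℂ}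

/-- `coeff 0 g' = 0` is needed because `pcomp` truncates as if `g` had no constant term. -/
theorem pcomp_of_eq_X (hf : HasCoeffDerivAt f f' x) (hg : HasCoeffDerivAt g g' x)
    (hfx : f x = X) (hgx : g x = X) (hg'0 : coeff 0 g' = 0) :
    HasCoeffDerivAt (fun ζ => pcomp (f ζ) (g ζ)) (f' + g') x := fun n => by
  have h := HasDerivAt.fun_sum (u := Finset.range (n + 1)) fun m _ => (hf m).fun_mul (hg.pow m n)
  have hval : ∑ m ∈ Finset.range (n + 1),
      (coeff m f' * coeff n (g x ^ m) +
        coeff m (f x) * coeff n ((m : PowerSeries ℂ) * g x ^ (m - 1) * g')) =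
      coeff n (f' + g') := by
    rcases n with _ | n
    · simpa [hgx, hfx] using hg'0
    · simp [hgx, hfx, coeff_X_pow, coeff_X, Finset.sum_add_distrib, mul_ite, ite_mul]
  rw [hval] at h
  simpa only [pcomp, coeff_mk] using h

theorem add_eq_zero_of_pcomp_eq_X (hf : HasCoeffDerivAt f f' x) (hg : HasCoeffDerivAt g g' x)
    (hfx : f x = X) (hgx : g x = X) (hg'0 : coeff 0 g' = 0)
    (h : ∀ᶠ ζ in 𝓝 x, pcomp (f ζ) (g ζ) = X) : f' + g' = 0 :=
  (hf.pcomp_of_eq_X hg hfx hgx hg'0).unique ((hasCoeffDerivAt_const X x).congr_of_eventuallyEq h)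

end HasCoeffDerivAt

/-- `V^{≤n}`. -/
def degLE (P : ℕ → V →ₗ[ℂ] V) (n : ℕ) : Submodule ℂ V :=
  ⨅ (m : ℕ) (_ : n < m), LinearMap.ker (P m)

section Grading

variable {L P : ℕ → V →ₗ[ℂ] V} {n : ℕ} {v : V}

theorem mem_degLE : v ∈ degLE P n ↔ ∀ m, n < m → P m v = 0 := by
  simp [degLE]

theorem degLE_mono {n' : ℕ} (h : n ≤ n') : degLE P n ≤ degLE P n' :=
  fun _ hv => mem_degLE.mpr fun m hm => mem_degLE.mp hv m (lt_of_le_of_lt h hm)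

theorem sum_range_P_eq (hPsum : ∀ v : V, ∑ᶠ m, P m v = v) (hv : v ∈ degLE P n) :
    ∑ m ∈ Finset.range (n + 1), P m v = v := by
  rw [← finsum_eq_sum_range_of_eq_zero fun m hm => mem_degLE.mp hv m hm, hPsum]

theorem L_zero_eq_sum (hPsum : ∀ v : V, ∑ᶠ m, P m v = v)
    (hL0 : ∀ (m : ℕ) (v : V), L 0 (P m v) = (m : ℂ) • P m v) (hv : v ∈ degLE P n) :
    L 0 v = ∑ m ∈ Finset.range (n + 1), (m : ℂ) • P m v := by
  conv_lhs => rw [← sum_range_P_eq hPsum hv]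
  rw [map_sum]
  exact Finset.sum_congr rfl fun m _ => hL0 m v

theorem L_mem_degLE (hLP : ∀ (k m : ℕ) (v : V), P m (L k v) = L k (P (m + k) v)) {k : ℕ}
    (hv : v ∈ degLE P (n + k)) : L k v ∈ degLE P n :=
  mem_degLE.mpr fun m hm => by rw [hLP, mem_degLE.mp hv _ (by omega), map_zero]

theorem L_apply_eq_zero (hPsum : ∀ v : V, ∑ᶠ m, P m v = v)
    (hLP : ∀ (k m : ℕ) (v : V), P m (L k v) = L k (P (m + k) v)) (hv : v ∈ degLE P n)
    {k : ℕ} (hk : n < k) : L k v = 0 := by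
  rw [← hPsum (L k v)]
  exact finsum_eq_zero_of_forall_eq_zero fun m => by
    rw [hLP, mem_degLE.mp hv _ (by omega), map_zero]

theorem Dop_eq_sum (hPsum : ∀ v : V, ∑ᶠ m, P m v = v)
    (hLP : ∀ (k m : ℕ) (v : V), P m (L k v) = L k (P (m + k) v)) (hv : v ∈ degLE P n)
    (c : ℕ → ℂ) : Dop L c v = ∑ k ∈ Finset.range n, c (k + 1) • L (k + 1) v :=
  finsum_eq_sum_range_of_eq_zero fun k hk => by
    rw [L_apply_eq_zero hPsum hLP hv (by omega), smul_zero]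

theorem Dop_mem_degLE (hPsum : ∀ v : V, ∑ᶠ m, P m v = v)
    (hLP : ∀ (k m : ℕ) (v : V), P m (L k v) = L k (P (m + k) v)) (hv : v ∈ degLE P (n + 1))
    (c : ℕ → ℂ) : Dop L c v ∈ degLE P n := by
  rw [Dop_eq_sum hPsum hLP hv]
  exact Submodule.sum_mem _ fun k _ =>
    Submodule.smul_mem _ _ (L_mem_degLE hLP (degLE_mono (by omega) hv))

theorem iterate_Dop_mem_degLE (hPsum : ∀ v : V, ∑ᶠ m, P m v = v)
    (hLP : ∀ (k m : ℕ) (v : V), P m (L k v) = L k (P (m + k) v)) (hv : v ∈ degLE P n)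
    (c : ℕ → ℂ) (j : ℕ) : (Dop L c)^[j] v ∈ degLE P n := by
  induction j with
  | zero => exact hv
  | succ j ih =>
    rw [Function.iterate_succ_apply']
    exact Dop_mem_degLE hPsum hLP (degLE_mono n.le_succ ih) c

@[simp]
theorem Dop_apply_zero (c : ℕ → ℂ) : Dop L c (0 : V) = 0 := by
  simp [Dop]

@[simp]
theorem Dop_zero (w : V) : Dop L (fun _ => 0) w = 0 := by
  simp [Dop]

theorem iterate_Dop_eq_zero (hPsum : ∀ v : V, ∑ᶠ m, P m v = v)
    (hLP : ∀ (k m : ℕ) (v : V), P m (L k v) = L k (P (m + k) v)) (c : ℕ → ℂ) :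
    ∀ {n : ℕ} {v : V}, v ∈ degLE P n → (Dop L c)^[n + 1] v = 0
  | 0, v, hv => by rw [Function.iterate_one, Dop_eq_sum hPsum hLP hv, Finset.sum_range_zero]
  | n + 1, v, hv => by
    rw [Function.iterate_succ_apply]
    exact iterate_Dop_eq_zero hPsum hLP c (Dop_mem_degLE hPsum hLP hv c)

theorem expD_eq_sum (hPsum : ∀ v : V, ∑ᶠ m, P m v = v)
    (hLP : ∀ (k m : ℕ) (v : V), P m (L k v) = L k (P (m + k) v)) (hv : v ∈ degLE P n)
    (c : ℕ → ℂ) :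
    expD L c v = ∑ j ∈ Finset.range (n + 1), (j.factorial : ℂ)⁻¹ • (Dop L c)^[j] v :=
  finsum_eq_sum_range_of_eq_zero fun j hj => by
    obtain ⟨i, rfl⟩ := Nat.exists_eq_add_of_le' hj
    rw [Function.iterate_add_apply, iterate_Dop_eq_zero hPsum hLP c hv,
      Function.iterate_fixed (Dop_apply_zero c), smul_zero]

theorem expD_mem_degLE (hPsum : ∀ v : V, ∑ᶠ m, P m v = v)
    (hLP : ∀ (k m : ℕ) (v : V), P m (L k v) = L k (P (m + k) v)) (hv : v ∈ degLE P n)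
    (c : ℕ → ℂ) : expD L c v ∈ degLE P n := by
  rw [expD_eq_sum hPsum hLP hv]
  exact Submodule.sum_mem _ fun j _ =>
    Submodule.smul_mem _ _ (iterate_Dop_mem_degLE hPsum hLP hv c j)

theorem expD_zero (v : V) : expD L (fun _ => 0) v = v := by
  rw [expD, finsum_eq_single _ 0]
  · simp
  · intro j hj
    obtain ⟨i, rfl⟩ := Nat.exists_eq_succ_of_ne_zero hj
    rw [Function.iterate_succ_apply', Dop_zero, smul_zero]

theorem aPow_eq_sum (hv : v ∈ degLE P n) (a : ℂ) :
    aPow P a v = ∑ m ∈ Finset.range (n + 1), a ^ m • P m v :=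
  finsum_eq_sum_range_of_eq_zero fun m hm => by rw [mem_degLE.mp hv m hm, smul_zero]

theorem finsum_coeff_smul_L (hPsum : ∀ v : V, ∑ᶠ m, P m v = v)
    (hLP : ∀ (k m : ℕ) (v : V), P m (L k v) = L k (P (m + k) v)) (hv : v ∈ degLE P n)
    (a' : ℂ) (c' : ℕ → ℂ) :
    ∑ᶠ k, coeff (k + 1) (C a' * X + vecField c') • L k v = a' • L 0 v + Dop L c' v := by
  rw [finsum_eq_sum_range_of_eq_zero (N := n + 1) fun k hk => by
      rw [L_apply_eq_zero hPsum hLP hv hk, smul_zero],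
    Finset.sum_range_succ', Dop_eq_sum hPsum hLP hv, add_comm]
  simp [vecField]

end Grading

def HasWeakDerivAt (f : ℂ → V) (f' : V) (x : ℂ) : Prop :=
  ∀ φ : V →ₗ[ℂ] ℂ, HasDerivAt (fun ζ => φ (f ζ)) (φ f') x

section Derivatives

variable {L P : ℕ → V →ₗ[ℂ] V} {n : ℕ} {v : V} {x : ℂ} {c : ℕ → ℂ → ℂ} {c' : ℕ → ℂ}

theorem hasWeakDerivAt_Dop (hPsum : ∀ v : V, ∑ᶠ m, P m v = v)
    (hLP : ∀ (k m : ℕ) (v : V), P m (L k v) = L k (P (m + k) v))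
    {w : ℂ → V} {w' : V} (hw : ∀ ζ, w ζ ∈ degLE P n) (hw' : HasWeakDerivAt w w' x)
    (hc : ∀ k, HasDerivAt (c k) (c' k) x) (hc0 : ∀ k, c k x = 0) :
    HasWeakDerivAt (fun ζ => Dop L (c · ζ) (w ζ)) (Dop L c' (w x)) x := fun φ => by
  have h := HasDerivAt.fun_sum (u := Finset.range n) fun k _ =>
    (hc (k + 1)).fun_mul (hw' (φ.comp (L (k + 1))))
  simp only [hc0, zero_mul, add_zero, LinearMap.comp_apply] at h
  have hfun : (fun ζ => φ (Dop L (c · ζ) (w ζ))) =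
      fun ζ => ∑ k ∈ Finset.range n, c (k + 1) ζ * φ (L (k + 1) (w ζ)) := funext fun ζ => by
    simp only [Dop_eq_sum hPsum hLP (hw ζ), map_sum, map_smul, smul_eq_mul]
  rw [hfun, Dop_eq_sum hPsum hLP (hw x)]
  simpa only [map_sum, map_smul, smul_eq_mul] using h

theorem hasWeakDerivAt_iterate_Dop (hPsum : ∀ v : V, ∑ᶠ m, P m v = v)
    (hLP : ∀ (k m : ℕ) (v : V), P m (L k v) = L k (P (m + k) v)) (hv : v ∈ degLE P n)
    (hc : ∀ k, HasDerivAt (c k) (c' k) x) (hc0 : ∀ k, c k x = 0) :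
    ∀ j : ℕ, HasWeakDerivAt (fun ζ => (Dop L (c · ζ))^[j] v)
      (if j = 1 then Dop L c' v else 0) x
  | 0 => fun φ => by simpa using hasDerivAt_const x (φ v)
  | j + 1 => by
    have h := hasWeakDerivAt_Dop hPsum hLP (fun ζ => iterate_Dop_mem_degLE hPsum hLP hv _ j)
      (hasWeakDerivAt_iterate_Dop hPsum hLP hv hc hc0 j) hc hc0
    rw [(funext hc0 : (c · x) = fun _ => 0)] at h
    simp only [Function.iterate_succ_apply']
    rcases j with _ | j
    · simpa using h
    · simpa [Function.iterate_succ_apply'] using h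

theorem hasWeakDerivAt_expD (hPsum : ∀ v : V, ∑ᶠ m, P m v = v)
    (hLP : ∀ (k m : ℕ) (v : V), P m (L k v) = L k (P (m + k) v)) (hv : v ∈ degLE P n)
    (hc : ∀ k, HasDerivAt (c k) (c' k) x) (hc0 : ∀ k, c k x = 0) :
    HasWeakDerivAt (fun ζ => expD L (c · ζ) v) (Dop L c' v) x := fun φ => by
  have h := HasDerivAt.fun_sum (u := Finset.range (n + 2)) fun j _ =>
    (hasWeakDerivAt_iterate_Dop hPsum hLP hv hc hc0 j φ).const_mul (j.factorial : ℂ)⁻¹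
  have hval : ∑ j ∈ Finset.range (n + 2),
      (j.factorial : ℂ)⁻¹ * φ (if j = 1 then Dop L c' v else 0) = φ (Dop L c' v) := by
    simp [apply_ite φ, mul_ite]
  rw [hval] at h
  have hfun : (fun ζ => φ (expD L (c · ζ) v)) = fun ζ => ∑ j ∈ Finset.range (n + 2),
      (j.factorial : ℂ)⁻¹ * φ ((Dop L (c · ζ))^[j] v) := funext fun ζ => by
    simp only [expD_eq_sum hPsum hLP (degLE_mono n.le_succ hv), map_sum, map_smul, smul_eq_mul]
  rwa [hfun]

theorem hasWeakDerivAt_aPow (hPsum : ∀ v : V, ∑ᶠ m, P m v = v)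
    (hL0 : ∀ (m : ℕ) (v : V), L 0 (P m v) = (m : ℂ) • P m v)
    {w : ℂ → V} {w' : V} (hw : ∀ ζ, w ζ ∈ degLE P n) (hw'n : w' ∈ degLE P n)
    (hw' : HasWeakDerivAt w w' x) {a : ℂ → ℂ} {a' : ℂ} (ha : HasDerivAt a a' x) (ha1 : a x = 1) :
    HasWeakDerivAt (fun ζ => aPow P (a ζ) (w ζ)) (a' • L 0 (w x) + w') x := fun φ => by
  have h := HasDerivAt.fun_sum (u := Finset.range (n + 1)) fun m _ =>
    (ha.fun_pow m).fun_mul (hw' (φ.comp (P m)))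
  have hval : ∑ m ∈ Finset.range (n + 1),
      ((m : ℂ) * a x ^ (m - 1) * a' * φ (P m (w x)) + a x ^ m * φ (P m w')) =
      φ (a' • L 0 (w x) + w') := by
    rw [map_add, map_smul, L_zero_eq_sum hPsum hL0 (hw x)]
    conv_rhs => rw [← sum_range_P_eq hPsum hw'n]
    simp only [ha1, one_pow, mul_one, one_mul, map_sum, map_smul, smul_eq_mul,
      Finset.sum_add_distrib, Finset.mul_sum]
    congr 1
    exact Finset.sum_congr rfl fun m _ => by ring
  simp only [LinearMap.comp_apply] at h
  rw [hval] at h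
  have hfun : (fun ζ => φ (aPow P (a ζ) (w ζ))) =
      fun ζ => ∑ m ∈ Finset.range (n + 1), a ζ ^ m * φ (P m (w ζ)) := funext fun ζ => by
    simp only [aPow_eq_sum (hw ζ), map_sum, map_smul, smul_eq_mul]
  rwa [hfun]

theorem hasWeakDerivAt_Uop (hPsum : ∀ v : V, ∑ᶠ m, P m v = v)
    (hL0 : ∀ (m : ℕ) (v : V), L 0 (P m v) = (m : ℂ) • P m v)
    (hLP : ∀ (k m : ℕ) (v : V), P m (L k v) = L k (P (m + k) v)) (hv : v ∈ degLE P n)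
    {a : ℂ → ℂ} {a' : ℂ} (ha : HasDerivAt a a' x) (ha1 : a x = 1)
    (hc : ∀ k, HasDerivAt (c k) (c' k) x) (hc0 : ∀ k, c k x = 0) :
    HasWeakDerivAt (fun ζ => Uop L P (a ζ) (c · ζ) v)
      (∑ᶠ k, coeff (k + 1) (C a' * X + vecField c') • L k v) x := by
  have h := hasWeakDerivAt_aPow hPsum hL0 (fun ζ => expD_mem_degLE hPsum hLP hv _)
    (Dop_mem_degLE hPsum hLP (degLE_mono n.le_succ hv) c')
    (hasWeakDerivAt_expD hPsum hLP hv hc hc0) ha ha1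
  rw [(funext hc0 : (c · x) = fun _ => 0), expD_zero] at h
  rwa [finsum_coeff_smul_L hPsum hLP hv]

end Derivatives

theorem deriv_Uop_at_zero_general
    (L P : ℕ → V →ₗ[ℂ] V)
    -- the grading: `P m` are the projections onto `V(m)`
    (hPsum : ∀ v : V, ∑ᶠ m, P m v = v)
    -- `L 0` acts on `V(m)` as `m`, and `L k` lowers degrees by `k`
    (hL0 : ∀ (m : ℕ) (v : V), L 0 (P m v) = (m : ℂ) • P m v)
    (hLP : ∀ (k m : ℕ) (v : V), P m (L k v) = L k (P (m + k) v))
    -- the families `ρ_ζ` and `ρ_ζ⁻¹`, with coordinates `c`, `cinv`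
    (T : Set ℂ) (hT : IsOpen T) (h0T : (0 : ℂ) ∈ T)
    (ρ ρinv : ℂ → PowerSeries ℂ) (c cinv : ℕ → ℂ → ℂ)
    (hhol : ∀ n : ℕ, DifferentiableOn ℂ (fun ζ => coeff n (ρ ζ)) T)
    (hid : ρ 0 = PowerSeries.X)
    (hchol : ∀ k : ℕ, DifferentiableOn ℂ (c k) T)
    (hc0 : ∀ k : ℕ, c k 0 = 0)
    (hdecomp : ∀ ζ ∈ T, ρ ζ = PowerSeries.C (coeff 1 (ρ ζ)) * expFlow (fun k => c k ζ))
    (hcinvhol : ∀ k : ℕ, DifferentiableOn ℂ (cinv k) T)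
    (hcinv0 : ∀ k : ℕ, cinv k 0 = 0)
    (hdecompinv : ∀ ζ ∈ T,
      ρinv ζ = PowerSeries.C (coeff 1 (ρinv ζ)) * expFlow (fun k => cinv k ζ))
    -- `ρinv_ζ` is the compositional inverse of `ρ_ζ`
    (hinv : ∀ ζ ∈ T, pcomp (ρ ζ) (ρinv ζ) = PowerSeries.X)
    -- a vector `v ∈ V^{≤n}`
    (n : ℕ) (v : V) (hv : ∀ m : ℕ, n < m → P m v = 0) :
    ∀ φ : V →ₗ[ℂ] ℂ,
      HasDerivAt (fun ζ => φ (Uop L P (coeff 1 (ρ ζ)) (fun k => c k ζ) v))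
        (φ (∑ᶠ k : ℕ, (((k + 1).factorial : ℂ)⁻¹ *
            deriv (fun ζ => ((k + 1).factorial : ℂ) * coeff (k + 1) (ρ ζ)) 0) • L k v)) 0 ∧
      HasDerivAt (fun ζ => φ (Uop L P (coeff 1 (ρinv ζ)) (fun k => cinv k ζ) v))
        (φ (-∑ᶠ k : ℕ, (((k + 1).factorial : ℂ)⁻¹ *
            deriv (fun ζ => ((k + 1).factorial : ℂ) * coeff (k + 1) (ρ ζ)) 0) • L k v)) 0 := by
  intro φ
  have hT0 : T ∈ 𝓝 (0 : ℂ) := hT.mem_nhds h0T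
  have hv' : v ∈ degLE P n := mem_degLE.mpr hv
  have hc : ∀ k, HasDerivAt (c k) _ 0 := fun k => ((hchol k).differentiableAt hT0).hasDerivAt
  have hcinv : ∀ k, HasDerivAt (cinv k) _ 0 :=
    fun k => ((hcinvhol k).differentiableAt hT0).hasDerivAt
  have ha : HasDerivAt (fun ζ => coeff 1 (ρ ζ)) _ 0 :=
    ((hhol 1).differentiableAt hT0).hasDerivAt
  have ha0 : coeff 1 (ρ 0) = 1 := by simp [hid]
  have hρinv0 : ρinv 0 = X := by
    have h := hinv 0 h0T
    rwa [hid, X_pcomp] at h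
    rw [hdecompinv 0 h0T, coeff_C_mul, coeff_zero_expFlow, mul_zero]
  have hainv := (differentiableAt_coeff_one_of_pcomp_eq_X ha.differentiableAt (by simp [ha0])
    (eventually_of_mem hT0 hinv)).hasDerivAt
  have hρ := hasCoeffDerivAt_of_eventuallyEq_C_mul_expFlow ha ha0 hc hc0
    (eventually_of_mem hT0 hdecomp)
  have hρinv := hasCoeffDerivAt_of_eventuallyEq_C_mul_expFlow hainv (by simp [hρinv0]) hcinv
    hcinv0 (eventually_of_mem hT0 hdecompinv)
  have hneg := eq_neg_of_add_eq_zero_right (hρ.add_eq_zero_of_pcomp_eq_X hρinv hid hρinv0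
    (by simp [vecField]) (eventually_of_mem hT0 hinv))
  simp only [fun k => inv_mul_deriv_const_mul (hρ (k + 1))
    (Nat.cast_ne_zero.mpr (Nat.factorial_ne_zero (k + 1)))]
  refine ⟨hasWeakDerivAt_Uop hPsum hL0 hLP hv' ha ha0 hc hc0 φ, ?_⟩
  have h := hasWeakDerivAt_Uop hPsum hL0 hLP hv' hainv (by simp [hρinv0]) hcinv hcinv0 φ
  rw [← finsum_neg_distrib]
  simpa only [hneg, map_neg, neg_smul] using h

theorem deriv_Uop_at_zero
    (L P : ℕ → V →ₗ[ℂ] V)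
    -- the grading: `P m` are the projections onto `V(m)`
    (hPfin : ∀ v : V, (Function.support fun m => P m v).Finite)
    (hPsum : ∀ v : V, ∑ᶠ m, P m v = v)
    (hPP : ∀ (m m' : ℕ) (v : V), P m (P m' v) = if m = m' then P m' v else 0)
    -- `L 0` acts on `V(m)` as `m`, and `L k` lowers degrees by `k`
    (hL0 : ∀ (m : ℕ) (v : V), L 0 (P m v) = (m : ℂ) • P m v)
    (hLP : ∀ (k m : ℕ) (v : V), P m (L k v) = L k (P (m + k) v))
    -- the families `ρ_ζ` and `ρ_ζ⁻¹`, with coordinates `c`, `cinv`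
    (T : Set ℂ) (hT : IsOpen T) (h0T : (0 : ℂ) ∈ T)
    (ρ ρinv : ℂ → PowerSeries ℂ) (c cinv : ℕ → ℂ → ℂ)
    (hρ0 : ∀ ζ ∈ T, coeff 0 (ρ ζ) = 0)
    (ha1 : ∀ ζ ∈ T, coeff 1 (ρ ζ) ≠ 0)
    (hhol : ∀ n : ℕ, DifferentiableOn ℂ (fun ζ => coeff n (ρ ζ)) T)
    (hconv : ∀ ζ ∈ T, ∃ r : ℝ, 0 < r ∧ Summable fun n : ℕ => ‖coeff n (ρ ζ)‖ * r ^ n)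
    (hid : ρ 0 = PowerSeries.X)
    (hchol : ∀ k : ℕ, DifferentiableOn ℂ (c k) T)
    (hc0 : ∀ k : ℕ, c k 0 = 0)
    (hdecomp : ∀ ζ ∈ T, ρ ζ = PowerSeries.C (coeff 1 (ρ ζ)) * expFlow (fun k => c k ζ))
    (hcinvhol : ∀ k : ℕ, DifferentiableOn ℂ (cinv k) T)
    (hcinv0 : ∀ k : ℕ, cinv k 0 = 0)
    (hdecompinv : ∀ ζ ∈ T,
      ρinv ζ = PowerSeries.C (coeff 1 (ρinv ζ)) * expFlow (fun k => cinv k ζ))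
    -- `ρinv_ζ` is the compositional inverse of `ρ_ζ`
    (hinv : ∀ ζ ∈ T, pcomp (ρ ζ) (ρinv ζ) = PowerSeries.X)
    (hinv' : ∀ ζ ∈ T, pcomp (ρinv ζ) (ρ ζ) = PowerSeries.X)
    -- a vector `v ∈ V^{≤n}`
    (n : ℕ) (v : V) (hv : ∀ m : ℕ, n < m → P m v = 0) :
    ∀ φ : V →ₗ[ℂ] ℂ,
      HasDerivAt (fun ζ => φ (Uop L P (coeff 1 (ρ ζ)) (fun k => c k ζ) v))
        (φ (∑ᶠ k : ℕ, (((k + 1).factorial : ℂ)⁻¹ *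
            deriv (fun ζ => ((k + 1).factorial : ℂ) * coeff (k + 1) (ρ ζ)) 0) • L k v)) 0 ∧
      HasDerivAt (fun ζ => φ (Uop L P (coeff 1 (ρinv ζ)) (fun k => cinv k ζ) v))
        (φ (-∑ᶠ k : ℕ, (((k + 1).factorial : ℂ)⁻¹ *
            deriv (fun ζ => ((k + 1).factorial : ℂ) * coeff (k + 1) (ρ ζ)) 0) • L k v)) 0 :=
  deriv_Uop_at_zero_general L P hPsum hL0 hLP T hT h0T ρ ρinv c cinv hhol hid hchol hc0 hdecomp
    hcinvhol hcinv0 hdecompinv hinv n v hv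

end
end

section
/- Let A be the annulus-type open set and let β : A × B → ℂ, (z,b) ↦ β_b(z), be a continuous family (b in a connected topological space B) of injective continuous maps on a circle rS^1 ⊂ ℂ, with β_{b_0}(z) = z for some base point b_0 ∈ B, and with 0 ∉ β_b(rS^1) for all b ∈ B. Let Γ_b be the Jordan curve β_b|_{rS^1} and Ω_b, Ω̃_b the bounded and unbounded components of ℂP^1 − Γ_b (∞ ∈ Ω̃_b). Then: (i) the sets O = {(z,b) : z ∈ Ω_b} and Õ = {(z,b) : z ∈ Ω̃_b} are open in ℂP^1 × B; (ii) 0 ∈ Ω_b for every b ∈ B. -/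
/-!
For `z` off the curve `Γ_b`, the lift of `t ↦ (Γ_b(t) - z) / (Γ_b(0) - z)` through the covering
map `exp : ℂ → ℂ \ {0}` starting at `0` ends at `2πi` times the winding number `W(z, b)`.
Homotopy lifting makes this endpoint continuous in `(z, b)`, and since it lies in the discrete set
`2πiℤ`, `W` is locally constant on the open set of points off the curves. At `b₀` the curve is the
circle `r𝕊¹`, so `W(0, b₀) = 1`, and connectedness of `B` gives `W(0, b) = 1` for all `b`. For
`|z|` large the loop `Γ_b - z` stays in a half-plane, so `W(z, b) = 0`, hence `W = 0` on the whole
unbounded component `Ω̃_b`. Thus `0 ∈ Ω_b`, `W = 1` on `Ω_b`, and `O`, `Õ` are the level sets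
`W = 1`, `W = 0`.
-/

open Complex Metric Set Topology unitInterval
open scoped Real

theorem IsLocallyConstant.apply_eq_of_isPreconnected_of_subset {X Y : Type*}
    [TopologicalSpace X] {U : Set X} {f : U → Y} (hf : IsLocallyConstant f) {s : Set X}
    (hs : IsPreconnected s) (hsU : s ⊆ U) {x y : U} (hx : ↑x ∈ s) (hy : ↑y ∈ s) :
    f x = f y := by
  refine hf.apply_eq_of_isPreconnected (s := Subtype.val ⁻¹' s) ?_ hx hy
  rwa [← Topology.IsInducing.subtypeVal.isPreconnected_image,
    image_preimage_eq_of_subset (by rwa [Subtype.range_coe])]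

theorem IsLocallyConstant.isOpen_of_union_eq {X Y : Type*} [TopologicalSpace X] {U : Set X}
    (hU : IsOpen U) {f : U → Y} (hf : IsLocallyConstant f) {S T : Set X} (hST : S ∪ T = U)
    {c c' : Y} (hS : ∀ x : U, ↑x ∈ S → f x = c) (hT : ∀ x : U, ↑x ∈ T → f x = c')
    (hc : c ≠ c') : IsOpen S := by
  have hfiber : S = Subtype.val '' {x | f x = c} := by
    ext x
    refine ⟨fun hx => ⟨⟨x, hST ▸ Or.inl hx⟩, hS _ hx, rfl⟩, ?_⟩
    rintro ⟨x, hx, rfl⟩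
    exact ((hST ▸ x.2 : ↑x ∈ S ∪ T)).resolve_right fun h => hc (hx.symm.trans (hT x h))
  rw [hfiber]
  exact hU.isOpenMap_subtype_val _ (hf.isOpen_fiber c)

theorem isLocallyConstant_of_exp_eq_one {A : Type*} [TopologicalSpace A] {w : A → ℂ}
    (hw : Continuous w) (h : ∀ a, exp (w a) = 1) : IsLocallyConstant w := by
  have hmem : ∀ a, w a ∈ AddSubgroup.zmultiples (2 * π * Complex.I) := fun a => by
    obtain ⟨n, hn⟩ := exp_eq_one_iff.1 (h a)
    exact ⟨n, by simp [hn]⟩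
  exact ((IsLocallyConstant.iff_continuous _).2 (hw.subtype_mk hmem)).comp Subtype.val

theorem range_circleMap_two_pi_mul (c : ℂ) (r : ℝ) :
    range (fun t : I => circleMap c r (2 * π * t)) = sphere c |r| := by
  refine Subset.antisymm (range_subset_iff.2 fun t => circleMap_mem_sphere' c r _) ?_
  rw [← image_circleMap_Ioc]
  rintro _ ⟨θ, ⟨hθ₀, hθ⟩, rfl⟩
  refine ⟨⟨θ / (2 * π), div_nonneg hθ₀.le (by positivity), (div_le_one (by positivity)).2 hθ⟩,
    ?_⟩
  dsimp only
  rw [mul_div_cancel₀ _ (by positivity)]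

section LogRatioLift

variable {A : Type*} [TopologicalSpace A] (H : C(I × A, ℂ)) (hH : ∀ x, H x ≠ 0)

noncomputable def logRatioLift : C(I × A, ℂ) :=
  isCoveringMap_exp.liftHomotopy
    ⟨fun x => ⟨H x / H (0, x.2), div_ne_zero (hH x) (hH _)⟩,
      Continuous.subtype_mk (by fun_prop (disch := exact fun _ => hH _)) _⟩ 0
    fun a => Subtype.ext (by simp [div_self (hH (0, a))])

theorem exp_logRatioLift (x : I × A) : exp (logRatioLift H hH x) = H x / H (0, x.2) :=
  congr_arg Subtype.val (congr_fun (isCoveringMap_exp.liftHomotopy_lifts _ _ _) x)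

theorem logRatioLift_eq {a : A} {θ : I → ℂ} (hθ : Continuous θ)
    (hexp : ∀ t, exp (θ t) = H (t, a) / H (0, a)) (hθ₀ : θ 0 = 0) (t : I) :
    logRatioLift H hH (t, a) = θ t := by
  refine congr_fun (isCoveringMap_exp.eq_of_comp_eq (g₁ := fun t => logRatioLift H hH (t, a))
    (by fun_prop) hθ ?_ 0 ?_) t
  · funext t
    exact Subtype.ext ((exp_logRatioLift H hH (t, a)).trans (hexp t).symm)
  · exact (isCoveringMap_exp.liftHomotopy_zero _ _ _ a).trans hθ₀.symm

variable {H}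

theorem isLocallyConstant_logRatioLift_one (hloop : ∀ a, H (1, a) = H (0, a)) :
    IsLocallyConstant fun a => logRatioLift H hH (1, a) :=
  isLocallyConstant_of_exp_eq_one (by fun_prop) fun a => by
    rw [exp_logRatioLift, hloop, div_self (hH _)]

theorem logRatioLift_one_eq_zero_of_mem_slitPlane {a : A} (hloop : H (1, a) = H (0, a))
    {c : ℂ} (hc : ∀ t, H (t, a) / c ∈ slitPlane) : logRatioLift H hH (1, a) = 0 := by
  have hc₀ : c ≠ 0 := fun h => slitPlane_ne_zero (hc 0) (by simp [h])
  rw [logRatioLift_eq H hH (θ := fun t => log (H (t, a) / c) - log (H (0, a) / c))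
    (((by fun_prop : Continuous fun t => H (t, a) / c).clog hc).sub continuous_const)
    (fun t => ?_) (sub_self _), hloop, sub_self]
  rw [exp_sub, exp_log (slitPlane_ne_zero (hc t)), exp_log (slitPlane_ne_zero (hc 0)),
    div_div_div_cancel_right₀ hc₀]

end LogRatioLift

section FamilyOfLoops

variable {B : Type*} [TopologicalSpace B] (Γ : C(I × B, ℂ))

def offLoops : Set (ℂ × B) := {p | ∀ t, Γ (t, p.2) ≠ p.1}

theorem isOpen_offLoops : IsOpen (offLoops Γ) := by
  have hcompl : (offLoops Γ)ᶜ = Prod.snd '' {q : I × (ℂ × B) | Γ (q.1, q.2.2) = q.2.1} := by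
    ext p
    constructor
    · intro hp
      obtain ⟨t, ht⟩ : ∃ t, Γ (t, p.2) = p.1 := by
        simpa only [offLoops, mem_compl_iff, mem_ofPred_eq, not_forall, not_not] using hp
      exact ⟨(t, p), ht, rfl⟩
    · rintro ⟨q, hq, rfl⟩ hoff
      exact hoff q.1 hq
  rw [← isClosed_compl_iff, hcompl]
  exact isClosedMap_snd_of_compactSpace _ (isClosed_eq (by fun_prop) (by fun_prop))

noncomputable def loopsAround : C(I × offLoops Γ, ℂ) :=
  ⟨fun x => Γ (x.1, x.2.1.2) - x.2.1.1, by fun_prop⟩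

theorem loopsAround_ne_zero (x : I × offLoops Γ) : loopsAround Γ x ≠ 0 :=
  sub_ne_zero.2 (x.2.2 x.1)

/-- `2πi` times the winding number of `Γ (·, b)` around `z`. -/
noncomputable def windingLog (p : offLoops Γ) : ℂ :=
  logRatioLift (loopsAround Γ) (loopsAround_ne_zero Γ) (1, p)

variable {Γ}

theorem isLocallyConstant_windingLog (hloop : ∀ b, Γ (1, b) = Γ (0, b)) :
    IsLocallyConstant (windingLog Γ) :=
  isLocallyConstant_logRatioLift_one _ fun p => by simp [loopsAround, hloop]

theorem windingLog_eq_two_pi_I_of_eq_circleMap {p : offLoops Γ} {r : ℝ} (hr : r ≠ 0)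
    (hΓ : ∀ t : I, Γ (t, p.1.2) = circleMap p.1.1 r (2 * π * t)) :
    windingLog Γ p = 2 * π * Complex.I := by
  rw [windingLog, logRatioLift_eq _ _ (θ := fun t : I => 2 * π * t * Complex.I) (by fun_prop)
    (fun t => ?_) (by simp)]
  · simp
  · simp only [loopsAround, ContinuousMap.coe_mk, hΓ, circleMap_sub_center, circleMap_zero]
    push_cast
    rw [mul_zero, zero_mul, exp_zero, mul_one, mul_div_cancel_left₀ _ (ofReal_ne_zero.2 hr)]

theorem windingLog_eq_zero_of_forall_norm_lt (hloop : ∀ b, Γ (1, b) = Γ (0, b))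
    {p : offLoops Γ} (hfar : ∀ t, ‖Γ (t, p.1.2)‖ < ‖p.1.1‖) : windingLog Γ p = 0 := by
  have hz : p.1.1 ≠ 0 := norm_pos_iff.1 ((norm_nonneg _).trans_lt (hfar 0))
  refine logRatioLift_one_eq_zero_of_mem_slitPlane _ (by simp [loopsAround, hloop])
    (c := -p.1.1) fun t => ?_
  have h : (Γ (t, p.1.2) - p.1.1) / -p.1.1 = 1 + -(Γ (t, p.1.2) / p.1.1) := by
    field_simp
    ring
  simp only [loopsAround, ContinuousMap.coe_mk, h]
  exact mem_slitPlane_of_norm_lt_one (by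
    rw [norm_neg, norm_div, div_lt_one (norm_pos_iff.2 hz)]
    exact hfar t)

theorem windingLog_eq_zero_of_not_isBounded (hloop : ∀ b, Γ (1, b) = Γ (0, b)) {s : Set ℂ}
    {b : B} (hs : IsPreconnected s) (hsb : ¬Bornology.IsBounded s)
    (hsoff : s ×ˢ {b} ⊆ offLoops Γ) {p : offLoops Γ} (hp : p.1 ∈ s ×ˢ {b}) :
    windingLog Γ p = 0 := by
  obtain ⟨R, hR⟩ := isBounded_iff_forall_norm_le.1
    (isCompact_range (f := fun t => Γ (t, b)) (by fun_prop)).isBounded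
  obtain ⟨z, hzs, hzR⟩ : ∃ z ∈ s, R < ‖z‖ := by
    by_contra! h
    exact hsb (isBounded_iff_forall_norm_le.2 ⟨R, h⟩)
  let q : offLoops Γ := ⟨(z, b), hsoff ⟨hzs, rfl⟩⟩
  rw [(isLocallyConstant_windingLog hloop).apply_eq_of_isPreconnected_of_subset
    (hs.prod isPreconnected_singleton) hsoff hp (y := q) ⟨hzs, rfl⟩]
  exact windingLog_eq_zero_of_forall_norm_lt hloop fun t => (hR _ ⟨t, rfl⟩).trans_lt hzR

theorem windingLog_zero_eq_two_pi_I [PreconnectedSpace B] (hloop : ∀ b, Γ (1, b) = Γ (0, b))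
    (hoff : ∀ b, ((0 : ℂ), b) ∈ offLoops Γ) {b₀ : B} {r : ℝ} (hr : r ≠ 0)
    (hbase : ∀ t : I, Γ (t, b₀) = circleMap 0 r (2 * π * t)) (b : B) :
    windingLog Γ ⟨(0, b), hoff b⟩ = 2 * π * Complex.I :=
  ((isLocallyConstant_windingLog hloop).apply_eq_of_isPreconnected_of_subset
    (s := {0} ×ˢ univ) (isPreconnected_singleton.prod isPreconnected_univ)
    (by rintro ⟨z, b'⟩ ⟨rfl : z = 0, -⟩; exact hoff b')
    (x := ⟨(0, b), hoff b⟩) (y := ⟨(0, b₀), hoff b₀⟩) ⟨rfl, trivial⟩ ⟨rfl, trivial⟩).trans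
    (windingLog_eq_two_pi_I_of_eq_circleMap hr hbase)

end FamilyOfLoops

theorem jordan_interior_family_open_and_contains_zero_general
    {B : Type*} [TopologicalSpace B] [ConnectedSpace B]
    (r : ℝ) (hr : 0 < r) (b₀ : B)
    (β : ℂ → B → ℂ)
    (hcont : ContinuousOn (fun p : ℂ × B => β p.1 p.2) ((sphere (0 : ℂ) r) ×ˢ Set.univ))
    (hbase : ∀ z ∈ sphere (0 : ℂ) r, β z b₀ = z)
    (h0 : ∀ b : B, ∀ z ∈ sphere (0 : ℂ) r, β z b ≠ 0)
    -- the two components of the complement of the Jordan curve `Γ_b = β_b(r𝕊¹)`,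
    -- as provided by the Jordan curve theorem
    (Ω Ωt : B → Set ℂ)
    (hconn : ∀ b, IsConnected (Ω b)) (hconnt : ∀ b, IsConnected (Ωt b))
    (hcover : ∀ b, Ω b ∪ Ωt b = ((fun z => β z b) '' sphere (0 : ℂ) r)ᶜ)
    (hunbdd : ∀ b, ¬ Bornology.IsBounded (Ωt b)) :
    -- (i) `O` and `Õ` are open
    IsOpen {p : ℂ × B | p.1 ∈ Ω p.2} ∧ IsOpen {p : ℂ × B | p.1 ∈ Ωt p.2} ∧
    -- (ii) `0` is inside `Γ_b` for every `b`
    ∀ b : B, (0 : ℂ) ∈ Ω b := by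
  let Γ : C(I × B, ℂ) := ⟨fun x => β (circleMap 0 r (2 * π * x.1)) x.2,
    hcont.comp_continuous (f := fun x : I × B => (circleMap 0 r (2 * π * x.1), x.2))
      (by fun_prop) fun x => ⟨circleMap_mem_sphere 0 hr.le _, trivial⟩⟩
  have hloop : ∀ b, Γ (1, b) = Γ (0, b) := fun b => by
    simpa [Γ] using congr_arg (β · b) (periodic_circleMap 0 r 0)
  have hoff : ∀ p : ℂ × B, p ∈ offLoops Γ ↔ p.1 ∈ Ω p.2 ∪ Ωt p.2 := fun p => by
    rw [hcover, ← abs_of_pos hr, ← range_circleMap_two_pi_mul, ← range_comp]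
    simp [offLoops, Γ]
  have hw := isLocallyConstant_windingLog hloop
  have h0off : ∀ b, ((0 : ℂ), b) ∈ offLoops Γ := fun b =>
    (hoff _).2 (by rw [hcover]; exact fun ⟨z, hz, hz0⟩ => h0 b z hz hz0)
  have hw0 := windingLog_zero_eq_two_pi_I hloop h0off hr.ne'
    fun t => hbase _ (circleMap_mem_sphere 0 hr.le _)
  have hwΩt : ∀ q : offLoops Γ, q.1.1 ∈ Ωt q.1.2 → windingLog Γ q = 0 := fun q hq =>
    windingLog_eq_zero_of_not_isBounded hloop (hconnt _).isPreconnected (hunbdd _)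
      (fun p hp => (hoff p).2 (by rw [hp.2]; exact Or.inr hp.1)) ⟨hq, rfl⟩
  have hii : ∀ b, (0 : ℂ) ∈ Ω b := fun b =>
    ((hoff _).1 (h0off b)).resolve_right fun h =>
      two_pi_I_ne_zero ((hw0 b).symm.trans (hwΩt _ h))
  have hwΩ : ∀ q : offLoops Γ, q.1.1 ∈ Ω q.1.2 → windingLog Γ q = 2 * π * Complex.I :=
    fun q hq => (hw.apply_eq_of_isPreconnected_of_subset
      ((hconn _).isPreconnected.prod isPreconnected_singleton)
      (fun p hp => (hoff p).2 (by rw [hp.2]; exact Or.inl hp.1)) ⟨hq, rfl⟩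
      (y := ⟨(0, q.1.2), h0off _⟩) ⟨hii _, rfl⟩).trans (hw0 _)
  have hunion : {p : ℂ × B | p.1 ∈ Ω p.2} ∪ {p | p.1 ∈ Ωt p.2} = offLoops Γ :=
    Set.ext fun p => (hoff p).symm
  exact ⟨hw.isOpen_of_union_eq (isOpen_offLoops Γ) hunion hwΩ hwΩt two_pi_I_ne_zero,
    hw.isOpen_of_union_eq (isOpen_offLoops Γ) (union_comm _ _ ▸ hunion) hwΩt hwΩ
      two_pi_I_ne_zero.symm, hii⟩

theorem jordan_interior_family_open_and_contains_zero
    {B : Type*} [TopologicalSpace B] [ConnectedSpace B]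
    (r : ℝ) (hr : 0 < r) (b₀ : B)
    (β : ℂ → B → ℂ)
    (hcont : ContinuousOn (fun p : ℂ × B => β p.1 p.2) ((sphere (0 : ℂ) r) ×ˢ Set.univ))
    (hinj : ∀ b : B, Set.InjOn (fun z => β z b) (sphere (0 : ℂ) r))
    (hbase : ∀ z ∈ sphere (0 : ℂ) r, β z b₀ = z)
    (h0 : ∀ b : B, ∀ z ∈ sphere (0 : ℂ) r, β z b ≠ 0)
    -- the two components of the complement of the Jordan curve `Γ_b = β_b(r𝕊¹)`,
    -- as provided by the Jordan curve theorem
    (Ω Ωt : B → Set ℂ)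
    (hopen : ∀ b, IsOpen (Ω b)) (hopent : ∀ b, IsOpen (Ωt b))
    (hconn : ∀ b, IsConnected (Ω b)) (hconnt : ∀ b, IsConnected (Ωt b))
    (hcover : ∀ b, Ω b ∪ Ωt b = ((fun z => β z b) '' sphere (0 : ℂ) r)ᶜ)
    (hdisj : ∀ b, Disjoint (Ω b) (Ωt b))
    (hbdd : ∀ b, Bornology.IsBounded (Ω b))
    (hunbdd : ∀ b, ¬ Bornology.IsBounded (Ωt b)) :
    -- (i) `O` and `Õ` are open
    IsOpen {p : ℂ × B | p.1 ∈ Ω p.2} ∧ IsOpen {p : ℂ × B | p.1 ∈ Ωt p.2} ∧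
    -- (ii) `0` is inside `Γ_b` for every `b`
    ∀ b : B, (0 : ℂ) ∈ Ω b :=
  jordan_interior_family_open_and_contains_zero_general r hr b₀ β hcont hbase h0 Ω Ωt hconn hconnt
    hcover hunbdd
end
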